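/- Define the following ℂ-linear subspaces of Fin 5 → ℂ: L₁ = {v : ∑ i, v i = 0, v 1 + v 4 = 0, v 2 + v 3 = 0}, L₂ = {v : ∑ i, v i = 0, v 0 + v 2 = 0, v 3 + v 4 = 0}, L₃ = {v : ∑ i, v i = 0, v 0 + v 4 = 0, v 1 + v 3 = 0}, L₄ = {v : ∑ i, v i = 0, v 0 + v 1 = 0, v 2 + v 4 = 0}, L₅ = {v : ∑ i, v i = 0, v 0 + v 3 = 0, v 1 + v 2 = 0}. Then: (a) each L_j is a 2-dimensional ℂ-subspace; (b) each L_j is contained in the Clebsch cone, i.e. every v ∈ L_j satisfies ∑ i, (v i)³ = 0 (so each L_j is a line lying on the Clebsch cubic surface); (c) for each j ∈ {1,…,5} the vectors c^{j−1} • R₂ and c^{j−1} • R₃ lie in L_j; (d) for j ≠ j', L_j ∩ L_{j'} = {0} (the five lines are pairwise disjoint in ℙ⁴). -/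

import Mathlib

/-- The 5-cycle `(0 1 2 3 4)` on `Fin 5`, sending `i` to `i + 1 (mod 5)`. -/
def c : Equiv.Perm (Fin 5) := finRotate 5

/-- The linear action of a permutation `g` on vectors: `(g • v) i = v (g⁻¹ i)`. -/
def permSMul (g : Equiv.Perm (Fin 5)) (v : Fin 5 → ℂ) : Fin 5 → ℂ := fun i => v (g⁻¹ i)

def R₂ : Fin 5 → ℂ := ![0, -Complex.I, -1, 1, Complex.I]
def R₃ : Fin 5 → ℂ := ![0, Complex.I, -1, 1, -Complex.I]

/-- The linear functional `v ↦ ∑ i, v i`. -/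
noncomputable def linSum : (Fin 5 → ℂ) →ₗ[ℂ] ℂ where
  toFun v := ∑ i, v i
  map_add' x y := by simp [Finset.sum_add_distrib]
  map_smul' m x := by simp [Finset.mul_sum]

/-- The linear functional `v ↦ v a + v b`. -/
def pairLin (a b : Fin 5) : (Fin 5 → ℂ) →ₗ[ℂ] ℂ where
  toFun v := v a + v b
  map_add' x y := by simp; ring
  map_smul' m x := by simp; ring

/-- The five lines `L₁, …, L₅` on the Clebsch cubic, as 2-dimensional linear subspaces
of the cone; `L j` (0-based) is `L_{j+1}` of the paper. -/
noncomputable def L : Fin 5 → Submodule ℂ (Fin 5 → ℂ) :=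
  ![LinearMap.ker linSum ⊓ LinearMap.ker (pairLin 1 4) ⊓ LinearMap.ker (pairLin 2 3),
    LinearMap.ker linSum ⊓ LinearMap.ker (pairLin 0 2) ⊓ LinearMap.ker (pairLin 3 4),
    LinearMap.ker linSum ⊓ LinearMap.ker (pairLin 0 4) ⊓ LinearMap.ker (pairLin 1 3),
    LinearMap.ker linSum ⊓ LinearMap.ker (pairLin 0 1) ⊓ LinearMap.ker (pairLin 2 4),
    LinearMap.ker linSum ⊓ LinearMap.ker (pairLin 0 3) ⊓ LinearMap.ker (pairLin 1 2)]

/-!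
Reading indices in `ℤ/5`, the line `L j` consists of the vectors that are odd about `j`,
`v (2j - i) = -v i`: the three defining equations say exactly this, the sum condition being a
consequence of the two pair conditions and `v j = 0`. Every odd power sum of such a vector vanishes,
because the reflection `i ↦ 2j - i` permutes the summands and changes their sign. A vector odd about
both `j` and `j' ≠ j` is invariant under the composite of the two reflections, the translation by
`2(j - j')`, which generates `ℤ/5`; so it is constant, and it vanishes at `j`. Translation by `j`
carries the vectors odd about `0` (among them `R₂` and `R₃`) onto those odd about `j`, and the
vectors odd about `0` are the `(0, x, y, -y, -x)`.
-/

section OddAbout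

variable {G K : Type*} [AddCommGroup G] [Field K]

variable (K) in
def oddAbout (j : G) : Submodule K (G → K) :=
  Module.End.eigenspace (LinearMap.funLeft K K (Equiv.subLeft (j + j))) (-1)

variable {j j' : G} {v : G → K}

theorem mem_oddAbout_iff : v ∈ oddAbout K j ↔ ∀ i, v (j + j - i) = -v i := by
  simp [oddAbout, funext_iff]

theorem apply_self_eq_zero_of_mem_oddAbout (hK : ringChar K ≠ 2) (hv : v ∈ oddAbout K j) :
    v j = 0 := by
  have h := mem_oddAbout_iff.1 hv j
  rw [add_sub_cancel_right] at h
  exact (Ring.eq_self_iff_eq_zero_of_char_ne_two hK).1 h.symm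

theorem sum_pow_eq_zero_of_mem_oddAbout [Fintype G] (hK : ringChar K ≠ 2) {n : ℕ} (hn : Odd n)
    (hv : v ∈ oddAbout K j) : ∑ i, v i ^ n = 0 := by
  have hneg : -∑ i, v i ^ n = ∑ i, v i ^ n :=
    calc -∑ i, v i ^ n = ∑ i, v (Equiv.subLeft (j + j) i) ^ n := by
          simp [mem_oddAbout_iff.1 hv, hn.neg_pow]
      _ = ∑ i, v i ^ n := Equiv.sum_comp _ (fun i => v i ^ n)
  exact (Ring.eq_self_iff_eq_zero_of_char_ne_two hK).1 hneg

theorem periodic_of_mem_oddAbout (hv : v ∈ oddAbout K j) (hv' : v ∈ oddAbout K j') :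
    Function.Periodic v (j + j - (j' + j')) := fun i => by
  have h := mem_oddAbout_iff.1 hv (j' + j' - i)
  rw [mem_oddAbout_iff.1 hv', neg_neg] at h
  rwa [show j + j - (j' + j' - i) = i + (j + j - (j' + j')) by abel] at h

theorem oddAbout_inf_oddAbout_eq_bot {p : ℕ} [Fact p.Prime] (hG : Nat.card G = p)
    (hK : ringChar K ≠ 2) (h : j + j ≠ j' + j') : oddAbout K j ⊓ oddAbout K j' = ⊥ := by
  refine (Submodule.eq_bot_iff _).2 fun v ⟨hv, hv'⟩ => funext fun k => ?_
  obtain ⟨n, hn : n • _ = k - j⟩ : k - j ∈ AddSubgroup.zmultiples (j + j - (j' + j')) := by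
    rw [zmultiples_eq_top_of_prime_card hG (sub_ne_zero.2 h)]
    trivial
  calc v k = v (j + n • (j + j - (j' + j'))) := by rw [hn, add_sub_cancel]
    _ = v j := (periodic_of_mem_oddAbout hv hv').zsmul n j
    _ = 0 := apply_self_eq_zero_of_mem_oddAbout hK hv

theorem translate_mem_oddAbout_iff (a t : G) :
    (fun i => v (i - t)) ∈ oddAbout K (a + t) ↔ v ∈ oddAbout K a := by
  simp only [mem_oddAbout_iff]
  refine ((Equiv.addRight t).forall_congr fun i => ?_).symm
  rw [Equiv.coe_addRight, add_sub_cancel_right,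
    show a + t + (a + t) - (i + t) - t = a + a - i by abel]

theorem map_oddAbout_zero (t : G) :
    (oddAbout K (0 : G)).map (LinearEquiv.funCongrLeft K K (Equiv.subRight t)).toLinearMap =
      oddAbout K t := by
  ext v
  have h := translate_mem_oddAbout_iff (K := K) (v := fun i => v (i + t)) 0 t
  simp only [sub_add_cancel, zero_add] at h
  exact (Submodule.mem_map_equiv _).trans h.symm

end OddAbout

section FinFive

variable {K : Type*} [Field K]

def oddAboutZeroEquiv (hK : ringChar K ≠ 2) : oddAbout K (0 : Fin 5) ≃ₗ[K] (Fin 2 → K) where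
  toFun v := ![v.1 1, v.1 2]
  invFun x := ⟨![0, x 0, x 1, -x 1, -x 0], mem_oddAbout_iff.2 fun i => by fin_cases i <;> simp⟩
  map_add' v w := by ext i; fin_cases i <;> rfl
  map_smul' a v := by ext i; fin_cases i <;> rfl
  left_inv v := by
    have h := mem_oddAbout_iff.1 v.2
    ext i
    fin_cases i
    · exact (apply_self_eq_zero_of_mem_oddAbout hK v.2).symm
    · rfl
    · rfl
    · exact (h 2).symm
    · exact (h 1).symm
  right_inv x := by ext i; fin_cases i <;> rfl

theorem finrank_oddAbout (hK : ringChar K ≠ 2) (j : Fin 5) :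
    Module.finrank K (oddAbout K j) = 2 := by
  rw [← map_oddAbout_zero, LinearEquiv.finrank_map_eq, (oddAboutZeroEquiv hK).finrank_eq,
    Module.finrank_fin_fun]

theorem L_eq_oddAbout (j : Fin 5) : L j = oddAbout ℂ j := by
  ext v
  rw [mem_oddAbout_iff]
  fin_cases j <;>
    simp only [L, linSum, pairLin, Submodule.mem_inf, LinearMap.mem_ker, LinearMap.coe_mk,
      AddHom.coe_mk, Fin.sum_univ_five, Fin.forall_fin_succ, Fin.isValue, Fin.reduceFinMk,
      Matrix.cons_val, Fin.succ_zero_eq_one, Fin.succ_one_eq_two, Fin.reduceSucc,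
      IsEmpty.forall_iff, and_true] <;>
    grind

theorem c_pow_val_apply (j i : Fin 5) : (c ^ (j : ℕ)) i = i + j := by
  revert j i
  decide

theorem permSMul_c_pow (j : Fin 5) (v : Fin 5 → ℂ) :
    permSMul (c ^ (j : ℕ)) v = fun i => v (i - j) := by
  funext i
  rw [permSMul, Equiv.Perm.inv_eq_iff_eq.2]
  rw [c_pow_val_apply, sub_add_cancel]

theorem R₂_mem_oddAbout : R₂ ∈ oddAbout ℂ (0 : Fin 5) :=
  mem_oddAbout_iff.2 fun i => by fin_cases i <;> simp [R₂]

theorem R₃_mem_oddAbout : R₃ ∈ oddAbout ℂ (0 : Fin 5) :=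
  mem_oddAbout_iff.2 fun i => by fin_cases i <;> simp [R₃]

end FinFive

theorem stmt4 :
    (∀ j : Fin 5, Module.finrank ℂ (L j) = 2) ∧
    (∀ j : Fin 5, ∀ v ∈ L j, (∑ i, (v i) ^ 3) = 0) ∧
    (∀ j : Fin 5, permSMul (c ^ (j : ℕ)) R₂ ∈ L j ∧ permSMul (c ^ (j : ℕ)) R₃ ∈ L j) ∧
    (∀ j j' : Fin 5, j ≠ j' → L j ⊓ L j' = ⊥) := by
  have hℂ : ringChar ℂ ≠ 2 := by rw [ringChar.eq_zero]; norm_num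
  have : Fact (Nat.Prime 5) := ⟨by norm_num⟩
  refine ⟨fun j => ?_, fun j v hv => ?_, fun j => ?_, fun j j' hjj' => ?_⟩
  · rw [L_eq_oddAbout]
    exact finrank_oddAbout hℂ j
  · rw [L_eq_oddAbout] at hv
    exact sum_pow_eq_zero_of_mem_oddAbout hℂ (by decide) hv
  · rw [L_eq_oddAbout, permSMul_c_pow, permSMul_c_pow]
    exact ⟨by simpa using (translate_mem_oddAbout_iff 0 j).2 R₂_mem_oddAbout,
      by simpa using (translate_mem_oddAbout_iff 0 j).2 R₃_mem_oddAbout⟩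
  · rw [L_eq_oddAbout, L_eq_oddAbout]
    refine oddAbout_inf_oddAbout_eq_bot (p := 5) (by simp) hℂ ?_
    revert j j'
    decide
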